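/- Let n ≥ 2 and v ∈ ℝ^{n−1} with ‖v‖ < 1. Then: (a) every face F of COP(Lⁿ) contained in COP(Lⁿ) ∩ {(1;v)(1;v)ᵀ}^⊥ equals S₊(X) for some linear subspace X of the hyperplane {(1;v)}^⊥; (b) conversely, for every d-dimensional subspace X of {(1;v)}^⊥, the set S₊(X) is an exposed face of COP(Lⁿ) of dimension T_d = d(d+1)/2. -/

import Mathlib

open Matrix
open scoped Pointwise

noncomputable section

/-- Frobenius inner product on real `n × n` matrices:
`⟨A,B⟩ = ∑ᵢⱼ Aᵢⱼ Bᵢⱼ`. -/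
def mip {n : ℕ} (A B : Matrix (Fin n) (Fin n) ℝ) : ℝ :=
  ∑ i, ∑ j, A i j * B i j

/-- `CPset S` (also used for `S₊(X)` when `S` is a subspace): the set of matrices of the
form `∑ᵢ aᵢaᵢᵀ` for a positive number of vectors `aᵢ ∈ S`. -/
def CPset {n : ℕ} (S : Set (Fin n → ℝ)) : Set (Matrix (Fin n) (Fin n) ℝ) :=
  {A | ∃ k : ℕ, 0 < k ∧ ∃ f : Fin k → (Fin n → ℝ),
        (∀ i, f i ∈ S) ∧ A = ∑ i, Matrix.vecMulVec (f i) (f i)}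

/-- `COPset K`: symmetric matrices `A` with `xᵀAx ≥ 0` for all `x ∈ K`. -/
def COPset {n : ℕ} (K : Set (Fin n → ℝ)) : Set (Matrix (Fin n) (Fin n) ℝ) :=
  {A | A.IsSymm ∧ ∀ x ∈ K, 0 ≤ x ⬝ᵥ A.mulVec x}

/-- `F` is a face of the convex cone `C`: a nonempty convex subcone such that
`a, b ∈ C`, `a + b ∈ F` imply `a, b ∈ F`. -/
def IsFaceOf {M : Type*} [AddCommMonoid M] [Module ℝ M] (C F : Set M) : Prop :=
  F.Nonempty ∧ F ⊆ C ∧ Convex ℝ F ∧ (∀ x ∈ F, ∀ c : ℝ, 0 ≤ c → c • x ∈ F) ∧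
    ∀ a ∈ C, ∀ b ∈ C, a + b ∈ F → a ∈ F ∧ b ∈ F

/-- Exposed face of a cone of matrices (w.r.t. the trace inner product). -/
def IsExposedFaceOf {n : ℕ} (C F : Set (Matrix (Fin n) (Fin n) ℝ)) : Prop :=
  IsFaceOf C F ∧ ∃ H : Matrix (Fin n) (Fin n) ℝ,
    (∀ A ∈ C, 0 ≤ mip H A) ∧ F = {A ∈ C | mip H A = 0}

/-- Dimension of a set: dimension of its linear span. -/
def setDim {M : Type*} [AddCommGroup M] [Module ℝ M] (S : Set M) : ℕ :=
  Module.finrank ℝ (Submodule.span ℝ S)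

/-- The ray `ℝ₊ • x`. -/
def rayOf {M : Type*} [AddCommMonoid M] [Module ℝ M] (x : M) : Set M :=
  {y | ∃ c : ℝ, 0 ≤ c ∧ y = c • x}

/-- An extreme ray: a one-dimensional face. -/
def IsExtremeRayOf {M : Type*} [AddCommGroup M] [Module ℝ M] (C F : Set M) : Prop :=
  IsFaceOf C F ∧ setDim F = 1

/-- The second-order cone `L^{m+1} = {x : x₀ ≥ ‖(x₁,…,xₘ)‖}`. -/
def soc (m : ℕ) : Set (Fin (m+1) → ℝ) :=
  {x | Real.sqrt (∑ i : Fin m, x i.succ ^ 2) ≤ x 0}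

/-- The boundary `∂L^{m+1} = {x : x₀ = ‖(x₁,…,xₘ)‖}`. -/
def socBd (m : ℕ) : Set (Fin (m+1) → ℝ) :=
  {x | Real.sqrt (∑ i : Fin m, x i.succ ^ 2) = x 0}

/-- The interior `int L^{m+1} = {x : x₀ > ‖(x₁,…,xₘ)‖}`. -/
def socInt (m : ℕ) : Set (Fin (m+1) → ℝ) :=
  {x | Real.sqrt (∑ i : Fin m, x i.succ ^ 2) < x 0}

/-- The matrix `J = diag(1, −1, …, −1)`. -/
def Jmat (m : ℕ) : Matrix (Fin (m+1)) (Fin (m+1)) ℝ :=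
  Matrix.diagonal fun i => if i = 0 then 1 else -1

/-- The hyperplane `{x : x ⬝ u = 0}` as a submodule. -/
def perpHyp {n : ℕ} (u : Fin n → ℝ) : Submodule ℝ (Fin n → ℝ) where
  carrier := {x | x ⬝ᵥ u = 0}
  add_mem' := by
    intro a b ha hb
    simp only [Set.mem_setOf_eq, add_dotProduct] at *
    linarith
  zero_mem' := by simp [zero_dotProduct]
  smul_mem' := by
    intro c a ha
    simp only [Set.mem_setOf_eq, smul_dotProduct] at *
    simp [ha]

/-- A polyhedral cone: nonnegative combinations of finitely many vectors. -/
def IsPolyhedralCone {M : Type*} [AddCommMonoid M] [Module ℝ M] (S : Set M) : Prop :=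
  ∃ (k : ℕ) (g : Fin k → M),
    S = {x | ∃ c : Fin k → ℝ, (∀ i, 0 ≤ c i) ∧ x = ∑ i, c i • g i}

end

section AuxProofs

variable {n : ℕ} {m : ℕ} {v : Fin m → ℝ}



lemma mip_comm (A B : Matrix (Fin n) (Fin n) ℝ) : mip A B = mip B A := by
  simp [mip, mul_comm]

lemma mip_add_right (M A B : Matrix (Fin n) (Fin n) ℝ) :
    mip M (A + B) = mip M A + mip M B := by
  simp [mip, mul_add, Finset.sum_add_distrib]

lemma mip_smul_right (M A : Matrix (Fin n) (Fin n) ℝ) (c : ℝ) :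
    mip M (c • A) = c * mip M A := by
  simp [mip, Finset.mul_sum]; ring_nf
  exact Finset.sum_congr rfl fun i _ => Finset.sum_congr rfl fun j _ => by ring

lemma mip_zero_right (M : Matrix (Fin n) (Fin n) ℝ) : mip M 0 = 0 := by simp [mip]

lemma mip_add_left (M N A : Matrix (Fin n) (Fin n) ℝ) :
    mip (M + N) A = mip M A + mip N A := by
  rw [mip_comm, mip_add_right, mip_comm A M, mip_comm A N]

lemma mip_smul_left (M A : Matrix (Fin n) (Fin n) ℝ) (c : ℝ) :
    mip (c • M) A = c * mip M A := by
  rw [mip_comm, mip_smul_right, mip_comm]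

lemma mip_sum_left {ι : Type*} (s : Finset ι) (f : ι → Matrix (Fin n) (Fin n) ℝ)
    (A : Matrix (Fin n) (Fin n) ℝ) : mip (∑ i ∈ s, f i) A = ∑ i ∈ s, mip (f i) A := by
  classical
  induction s using Finset.induction with
  | empty => simp [mip]
  | insert _ _ h ih => rw [Finset.sum_insert h, mip_add_left, ih, Finset.sum_insert h]

lemma dot_vecMulVec_mulVec (a b x y : Fin n → ℝ) :
    x ⬝ᵥ (vecMulVec a b) *ᵥ y = (x ⬝ᵥ a) * (b ⬝ᵥ y) := by
  simp [dotProduct, mulVec, vecMulVec_apply, Finset.mul_sum, Finset.sum_mul]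
  rw [Finset.sum_comm]
  exact Finset.sum_congr rfl fun i _ => Finset.sum_congr rfl fun j _ => by ring

lemma mip_vecMulVec_left (a : Fin n → ℝ) (A : Matrix (Fin n) (Fin n) ℝ) :
    mip (vecMulVec a a) A = a ⬝ᵥ A *ᵥ a := by
  simp [mip, vecMulVec_apply, dotProduct, mulVec, Finset.mul_sum]
  exact Finset.sum_congr rfl fun i _ => Finset.sum_congr rfl fun j _ => by ring

lemma mip_vecMulVec_right (a : Fin n → ℝ) (A : Matrix (Fin n) (Fin n) ℝ) :
    mip A (vecMulVec a a) = a ⬝ᵥ A *ᵥ a := by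
  rw [mip_comm]; exact mip_vecMulVec_left a A

lemma dot_sum_mulVec {ι : Type*} (s : Finset ι) (f : ι → Matrix (Fin n) (Fin n) ℝ)
    (x y : Fin n → ℝ) : x ⬝ᵥ (∑ i ∈ s, f i) *ᵥ y = ∑ i ∈ s, x ⬝ᵥ (f i) *ᵥ y := by
  classical
  induction s using Finset.induction with
  | empty => simp
  | insert _ _ h ih => rw [Finset.sum_insert h, Finset.sum_insert h, ← ih,
      Matrix.add_mulVec, dotProduct_add]

lemma dot_sum_vecMulVec {ι : Type*} (s : Finset ι) (a : ι → Fin n → ℝ) (x : Fin n → ℝ) :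
    x ⬝ᵥ (∑ i ∈ s, vecMulVec (a i) (a i)) *ᵥ x = ∑ i ∈ s, (a i ⬝ᵥ x)^2 := by
  rw [dot_sum_mulVec]
  exact Finset.sum_congr rfl fun i _ => by
    rw [dot_vecMulVec_mulVec, dotProduct_comm x (a i)]; ring

lemma quad_expand (A : Matrix (Fin n) (Fin n) ℝ) (x y : Fin n → ℝ) (t : ℝ) :
    (x + t • y) ⬝ᵥ A *ᵥ (x + t • y)
      = x ⬝ᵥ A *ᵥ x + t * (x ⬝ᵥ A *ᵥ y + y ⬝ᵥ A *ᵥ x) + t^2 * (y ⬝ᵥ A *ᵥ y) := by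
  rw [Matrix.mulVec_add, Matrix.mulVec_smul]
  simp [dotProduct_add, add_dotProduct, smul_dotProduct, dotProduct_smul, smul_eq_mul]
  ring

lemma dot_mulVec_symm {A : Matrix (Fin n) (Fin n) ℝ} (hA : A.IsSymm) (x y : Fin n → ℝ) :
    x ⬝ᵥ A *ᵥ y = y ⬝ᵥ A *ᵥ x := by
  simp only [dotProduct, mulVec, Finset.mul_sum]
  rw [Finset.sum_comm]
  exact Finset.sum_congr rfl fun i _ => Finset.sum_congr rfl fun j _ => by
    rw [hA.apply i j]; ring





lemma psd_mem_cop {A : Matrix (Fin (m+1)) (Fin (m+1)) ℝ} (hA : A.PosSemidef) :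
    A ∈ COPset (soc m) := by
  refine ⟨?_, fun x _ => ?_⟩
  · have := hA.1
    rw [Matrix.IsHermitian, conjTranspose_eq_transpose_of_trivial] at this
    exact this
  · have := hA.dotProduct_mulVec_nonneg x
    simpa using this

lemma psd_dot_zero {A : Matrix (Fin (m+1)) (Fin (m+1)) ℝ} (hA : A.PosSemidef)
    {x : Fin (m+1) → ℝ} (h : x ⬝ᵥ A *ᵥ x = 0) : A *ᵥ x = 0 := by
  rw [← hA.dotProduct_mulVec_zero_iff]
  simpa using h

-- u := vecCons 1 v, interior point
lemma sum_sq_lt_one (hv : Real.sqrt (∑ i, v i ^ 2) < 1) : ∑ i, v i ^ 2 < 1 := by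
  have h0 : 0 ≤ ∑ i, v i ^ 2 := Finset.sum_nonneg fun i _ => sq_nonneg _
  nlinarith [Real.sq_sqrt h0, Real.sqrt_nonneg (∑ i, v i ^ 2)]

lemma u_mem_soc (hv : Real.sqrt (∑ i, v i ^ 2) < 1) : Matrix.vecCons 1 v ∈ soc m := by
  simp only [soc, Set.mem_setOf_eq, Matrix.cons_val_succ, Matrix.cons_val_zero]
  exact le_of_lt hv

/-- For every direction `w`, `u + t w` stays in the cone for small `t`. -/
lemma small_pert (hv : Real.sqrt (∑ i, v i ^ 2) < 1) (w : Fin (m+1) → ℝ) :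
    ∃ ε : ℝ, 0 < ε ∧ ∀ t : ℝ, |t| ≤ ε → Matrix.vecCons 1 v + t • w ∈ soc m := by
  set u := Matrix.vecCons 1 v with hu
  set f : ℝ → ℝ := fun t =>
    (u 0 + t * w 0) - Real.sqrt (∑ i : Fin m, (u i.succ + t * w i.succ) ^ 2) with hf
  have hcont : Continuous f := by
    apply Continuous.sub
    · fun_prop
    · apply Real.continuous_sqrt.comp
      fun_prop
  have hf0 : 0 < f 0 := by
    simp only [hf, hu, Matrix.cons_val_zero, Matrix.cons_val_succ]
    simpa using sub_pos.mpr hv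
  have hopen : IsOpen {t : ℝ | 0 < f t} := isOpen_lt continuous_const hcont
  obtain ⟨ε, hε, hball⟩ := Metric.isOpen_iff.1 hopen 0 hf0
  refine ⟨ε/2, by linarith, fun t ht => ?_⟩
  have : t ∈ Metric.ball (0:ℝ) ε := by
    simp only [Metric.mem_ball, Real.dist_eq, sub_zero]
    have := abs_nonneg t; linarith
  have hft : 0 < f t := hball this
  simp only [soc, Set.mem_setOf_eq, Pi.add_apply, Pi.smul_apply, smul_eq_mul]
  have : ∀ i : Fin m, (u + t • w) i.succ = u i.succ + t * w i.succ := fun i => rfl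
  simp only [hf] at hft
  have h2 : Real.sqrt (∑ i : Fin m, (u i.succ + t * w i.succ) ^ 2) ≤ u 0 + t * w 0 :=
    le_of_lt (by linarith)
  simpa [hu] using h2

/-- KEY LEMMA: `A` copositive with `uᵀAu = 0`, `u` interior, implies `A` PSD and `Au = 0`. -/
lemma psd_of_cop_perp (hv : Real.sqrt (∑ i, v i ^ 2) < 1)
    {A : Matrix (Fin (m+1)) (Fin (m+1)) ℝ} (hA : A ∈ COPset (soc m))
    (h : Matrix.vecCons 1 v ⬝ᵥ A *ᵥ Matrix.vecCons 1 v = 0) :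
    A.PosSemidef ∧ A *ᵥ Matrix.vecCons 1 v = 0 := by
  set u := Matrix.vecCons 1 v with hu
  have key : ∀ w : Fin (m+1) → ℝ, u ⬝ᵥ A *ᵥ w = 0 ∧ 0 ≤ w ⬝ᵥ A *ᵥ w := by
    intro w
    obtain ⟨ε, hε, hmem⟩ := small_pert hv w
    have hq : ∀ t : ℝ, |t| ≤ ε → 0 ≤ 2 * t * (u ⬝ᵥ A *ᵥ w) + t^2 * (w ⬝ᵥ A *ᵥ w) := by
      intro t ht
      have := hA.2 _ (hmem t ht)
      rw [quad_expand] at this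
      rw [dot_mulVec_symm hA.1 w u] at this
      rw [h] at this
      linarith
    set b := u ⬝ᵥ A *ᵥ w with hb
    set c := w ⬝ᵥ A *ᵥ w with hc
    have hb0 : b = 0 := by
      by_contra hbne
      set t₀ := min ε (|b| / (|c| + 1)) with ht₀
      have habs : 0 < |b| := abs_pos.mpr hbne
      have hc1 : 0 < |c| + 1 := by positivity
      have ht₀pos : 0 < t₀ := lt_min hε (by positivity)
      have ht₀le : t₀ ≤ ε := min_le_left _ _
      have ht₀le2 : t₀ ≤ |b| / (|c| + 1) := min_le_right _ _
      have h1 := hq t₀ (by rw [abs_of_pos ht₀pos]; exact ht₀le)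
      have h2 := hq (-t₀) (by rw [abs_neg, abs_of_pos ht₀pos]; exact ht₀le)
      -- 2 t₀ |b| ≤ t₀² |c|  ⇒  2|b| ≤ t₀ |c| ≤ t₀ (|c|+1) ≤ |b|
      have hbb : 2 * t₀ * |b| ≤ t₀^2 * |c| := by
        rcases le_or_gt 0 b with hbs | hbs
        · have : |b| = b := abs_of_nonneg hbs
          nlinarith [neg_abs_le c, le_abs_self c]
        · have : |b| = -b := abs_of_neg hbs
          nlinarith [neg_abs_le c, le_abs_self c]
      have : 2 * |b| ≤ t₀ * (|c| + 1) := by nlinarith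
      have : t₀ * (|c| + 1) ≤ |b| := by
        calc t₀ * (|c| + 1) ≤ (|b| / (|c| + 1)) * (|c| + 1) := by nlinarith
        _ = |b| := by field_simp
      linarith
    refine ⟨hb0, ?_⟩
    have h1 := hq ε (by rw [abs_of_pos hε])
    rw [hb0] at h1
    nlinarith [mul_pos hε hε]
  constructor
  · refine Matrix.PosSemidef.of_dotProduct_mulVec_nonneg ?_ ?_
    · rw [Matrix.IsHermitian, conjTranspose_eq_transpose_of_trivial]; exact hA.1
    · intro x; simpa using (key x).2
  · funext i
    have := (key (Pi.single i 1)).1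
    rw [Matrix.mulVec_single] at this
    have h2 : ∑ j, u j * (A j i * 1) = 0 := this
    have h3 : (A *ᵥ u) i = ∑ j, A i j * u j := rfl
    rw [h3, Pi.zero_apply, ← h2]
    exact Finset.sum_congr rfl fun j _ => by rw [hA.1.apply i j]; ring

set_option maxHeartbeats 1000000 in
/-- CROSSING LEMMA: for `y ⊥ u`, `y ≠ 0`, there is `s > 0` with
`0 ≤ uᵀAu + s yᵀAy` for every copositive `A`. -/
lemma crossing (hv : Real.sqrt (∑ i, v i ^ 2) < 1) {y : Fin (m+1) → ℝ}
    (hy : y ⬝ᵥ Matrix.vecCons 1 v = 0) (hy0 : y ≠ 0) :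
    ∃ s : ℝ, 0 < s ∧ ∀ A ∈ COPset (soc m),
      0 ≤ Matrix.vecCons 1 v ⬝ᵥ A *ᵥ Matrix.vecCons 1 v + s * (y ⬝ᵥ A *ᵥ y) := by
  have hu0 : (Matrix.vecCons 1 v : Fin (m+1) → ℝ) 0 = 1 := rfl
  set u := Matrix.vecCons 1 v with hudef
  obtain ⟨γ, hγdef⟩ : ∃ γ : ℝ, γ = 1 - ∑ i, v i ^ 2 := ⟨_, rfl⟩
  obtain ⟨σ, hσdef⟩ : ∃ σ : ℝ, σ = ∑ i : Fin m, y i.succ ^ 2 := ⟨_, rfl⟩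
  obtain ⟨α, hαdef⟩ : ∃ α : ℝ, α = (y 0)^2 - σ := ⟨_, rfl⟩
  obtain ⟨β, hβdef⟩ : ∃ β : ℝ, β = y 0 - ∑ i : Fin m, v i * y i.succ := ⟨_, rfl⟩
  have hγ : 0 < γ := by rw [hγdef]; have := sum_sq_lt_one hv; linarith
  have hyu : y 0 = -∑ i : Fin m, y i.succ * v i := by
    have h1 : y ⬝ᵥ u = 0 := hy
    rw [dotProduct, Fin.sum_univ_succ] at h1
    simp only [hudef, Matrix.cons_val_zero, Matrix.cons_val_succ, mul_one] at h1
    linarith [h1]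
  have hσnn : 0 ≤ σ := by
    rw [hσdef]; exact Finset.sum_nonneg fun (i : Fin m) _ => sq_nonneg (y i.succ)
  have hσpos : 0 < σ := by
    rcases lt_or_eq_of_le hσnn with h | h
    · exact h
    · exfalso
      apply hy0
      have hσ0 : ∑ i : Fin m, y i.succ ^ 2 = 0 := by rw [← hσdef, ← h]
      have hz : ∀ i : Fin m, y i.succ = 0 := by
        intro i
        have := (Finset.sum_eq_zero_iff_of_nonneg
          (fun (i : Fin m) (_ : i ∈ Finset.univ) => sq_nonneg (y i.succ))).mp hσ0 i
          (Finset.mem_univ i)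
        exact pow_eq_zero_iff (by norm_num) |>.mp this
      funext j
      refine Fin.cases ?_ ?_ j
      · rw [Pi.zero_apply, hyu]; simp [hz]
      · intro i; rw [Pi.zero_apply]; exact hz i
  have hα : α < 0 := by
    have hcs := Finset.sum_mul_sq_le_sq_mul_sq Finset.univ (fun i => y i.succ) v
    have h1 : (y 0)^2 = (∑ i : Fin m, y i.succ * v i)^2 := by rw [hyu]; ring
    have hvlt := sum_sq_lt_one hv
    have hv0 : 0 ≤ ∑ i, v i ^2 := Finset.sum_nonneg fun i _ => sq_nonneg _
    have h2 : (y 0)^2 ≤ σ * ∑ i, v i ^ 2 := by rw [h1, hσdef]; exact hcs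
    rw [hαdef]; nlinarith
  have hnα : 0 < -α := by linarith
  have hαne : α ≠ 0 := ne_of_lt hα
  have hD : 0 < β^2 - α*γ := by nlinarith [sq_nonneg β]
  obtain ⟨r, hrdef⟩ : ∃ r : ℝ, r = Real.sqrt (β^2 - α*γ) := ⟨_, rfl⟩
  have hr2 : r^2 = β^2 - α*γ := by rw [hrdef]; exact Real.sq_sqrt hD.le
  have hrβ : |β| < r := by
    rw [hrdef, ← Real.sqrt_sq_eq_abs]
    exact Real.sqrt_lt_sqrt (sq_nonneg β) (by nlinarith)
  obtain ⟨t₂, ht₂def⟩ : ∃ t : ℝ, t = (β + r)/(-α) := ⟨_, rfl⟩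
  obtain ⟨t₁, ht₁def⟩ : ∃ t : ℝ, t = (β - r)/(-α) := ⟨_, rfl⟩
  have ht₂ : 0 < t₂ := by
    rw [ht₂def]; exact div_pos (by cases abs_cases β <;> linarith) hnα
  have ht₁ : t₁ < 0 := by
    rw [ht₁def]; exact div_neg_of_neg_of_pos (by cases abs_cases β <;> linarith) hnα
  have hat2 : α * t₂ = -(β + r) := by rw [ht₂def]; field_simp
  have hat1 : α * t₁ = -(β - r) := by rw [ht₁def]; field_simp
  -- root equations
  have h5₂ : α * ((β - r) * t₂) = α * (-γ) := by
    linear_combination (β - r) * hat2 + hr2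
  have h6₂ : (β - r) * t₂ = -γ := mul_left_cancel₀ hαne h5₂
  have hroot₂ : γ + 2*β*t₂ + α*t₂^2 = 0 := by linear_combination t₂ * hat2 + h6₂
  have h5₁ : α * ((β + r) * t₁) = α * (-γ) := by
    linear_combination (β + r) * hat1 + hr2
  have h6₁ : (β + r) * t₁ = -γ := mul_left_cancel₀ hαne h5₁
  have hroot₁ : γ + 2*β*t₁ + α*t₁^2 = 0 := by linear_combination t₁ * hat1 + h6₁
  have hroot : ∀ t, t = t₁ ∨ t = t₂ → γ + 2*β*t + α*t^2 = 0 := by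
    rintro t (rfl | rfl) <;> assumption
  -- quadratic identity
  have expand : ∀ t : ℝ, ∑ i : Fin m, (v i + t * y i.succ)^2
      = (∑ i, v i^2) + (2*t)*(∑ i : Fin m, v i * y i.succ) + t^2 * σ := by
    intro t
    rw [Finset.sum_congr rfl (fun i (_ : i ∈ Finset.univ) =>
      (by ring : (v i + t * y i.succ)^2
        = v i^2 + (2*t)*(v i * y i.succ) + t^2 * (y i.succ)^2))]
    rw [Finset.sum_add_distrib, Finset.sum_add_distrib, ← Finset.mul_sum, ← Finset.mul_sum,
      hσdef]
  have gident : ∀ t : ℝ, ((u + t • y) 0)^2 - ∑ i : Fin m, ((u + t • y) i.succ)^2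
      = γ + 2*β*t + α*t^2 := by
    intro t
    have h0 : (u + t • y) 0 = 1 + t * y 0 := by
      simp [hudef, Pi.add_apply, Pi.smul_apply, smul_eq_mul]
    have hsucc : ∀ i : Fin m, (u + t • y) i.succ = v i + t * y i.succ := by
      intro i; simp [hudef, Pi.add_apply, Pi.smul_apply, smul_eq_mul]
    rw [h0, Finset.sum_congr rfl fun i _ => by rw [hsucc i], expand t]
    rw [hγdef, hαdef, hβdef, hσdef]
    ring
  -- membership of the two points
  have hmem : ∀ t, t = t₁ ∨ t = t₂ → u + t • y ∈ soc m := by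
    intro t ht
    have hg := hroot t ht
    have hx0 : 0 ≤ 1 + t * y 0 := by
      by_contra hneg
      push_neg at hneg
      have hq : t * y 0 < -1 := by linarith
      have hy0ne : y 0 ≠ 0 := by intro h0; rw [h0, mul_zero] at hq; linarith
      obtain ⟨t', ht'def⟩ : ∃ t' : ℝ, t' = -1 / y 0 := ⟨_, rfl⟩
      have hx0' : (u + t' • y) 0 = 0 := by
        simp only [hudef, Pi.add_apply, Pi.smul_apply, smul_eq_mul, Matrix.cons_val_zero]
        rw [ht'def]; field_simp; ring
      have hgt' : γ + 2*β*t' + α*t'^2 ≤ 0 := by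
        rw [← gident t', hx0']
        have h9 : (0:ℝ)^2 - ∑ i : Fin m, ((u + t' • y) i.succ)^2
            = -∑ i : Fin m, ((u + t' • y) i.succ)^2 := by ring
        rw [h9, neg_nonpos]
        exact Finset.sum_nonneg fun i _ => sq_nonneg _
      have hmul : γ*(y 0)^2 - 2*β*(y 0) + α ≤ 0 := by
        have h2 := mul_le_mul_of_nonneg_left hgt' (sq_nonneg (y 0))
        rw [mul_zero] at h2
        have hexp : (y 0)^2 * (γ + 2*β*t' + α*t'^2) = γ*(y 0)^2 - 2*β*(y 0) + α := by
          rw [ht'def]; field_simp; ring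
        rw [hexp] at h2
        exact h2
      -- contradiction
      have hz : γ*(t * y 0) + α*t^2 < 0 := by
        nlinarith [mul_lt_mul_of_pos_left hq hγ, mul_nonneg (neg_nonneg.mpr hα.le) (sq_nonneg t)]
      have hw : t * y 0 + 1 < 0 := by linarith
      have hpos : 0 < (t * y 0 + 1) * (γ*(t * y 0) + α*t^2) := mul_pos_of_neg_of_neg hw hz
      have hle : (t * y 0 + 1) * (γ*(t * y 0) + α*t^2) ≤ 0 := by
        have hident : (t * y 0 + 1) * (γ*(t * y 0) + α*t^2)
            = t^2*(γ*(y 0)^2 - 2*β*(y 0) + α) + (y 0 * t)*(γ + 2*β*t + α*t^2) := by ring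
        rw [hident, hg, mul_zero, add_zero]
        exact mul_nonpos_of_nonneg_of_nonpos (sq_nonneg t) hmul
      linarith
    have hx0' : (u + t • y) 0 = 1 + t * y 0 := by
      simp [hudef, Pi.add_apply, Pi.smul_apply, smul_eq_mul]
    have hsq : ∑ i : Fin m, ((u + t • y) i.succ)^2 = ((u + t • y) 0)^2 := by
      have := gident t
      rw [hg] at this
      linarith
    show Real.sqrt (∑ i : Fin m, ((u + t • y) i.succ)^2) ≤ (u + t • y) 0
    rw [hsq, Real.sqrt_sq (by rw [hx0']; exact hx0)]
  -- final inequality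
  refine ⟨γ / (-α), div_pos hγ hnα, fun A hA => ?_⟩
  have h1 := hA.2 _ (hmem t₁ (Or.inl rfl))
  have h2 := hA.2 _ (hmem t₂ (Or.inr rfl))
  rw [quad_expand] at h1 h2
  have hdiff : 0 < t₂ - t₁ := by linarith
  have h8 : α * (α * (t₁ * t₂)) = α * γ := by
    linear_combination (α*t₂) * hat1 - (β - r) * hat2 - hr2
  have h9 : α * (t₁ * t₂) = γ := mul_left_cancel₀ hαne h8
  have hs_eq : γ / (-α) = -(t₁ * t₂) := by
    rw [div_eq_iff (ne_of_gt hnα)]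
    linear_combination -h9
  rw [hs_eq]
  by_contra hcon
  push_neg at hcon
  nlinarith [mul_nonneg (le_of_lt (neg_pos.mpr ht₁)) h2, mul_nonneg ht₂.le h1,
    mul_pos hdiff (neg_pos.mpr hcon)]

open RealInnerProductSpace in
lemma inner_eq_dot {n : ℕ} (x y : EuclideanSpace ℝ (Fin n)) : ⟪x, y⟫ = x ⬝ᵥ y := by
  simp [PiLp.inner_apply, dotProduct, RCLike.inner_apply, mul_comm]

def toE {n : ℕ} (X : Submodule ℝ (Fin n → ℝ)) : Submodule ℝ (EuclideanSpace ℝ (Fin n)) :=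
  X.comap (WithLp.linearEquiv 2 ℝ (Fin n → ℝ) : EuclideanSpace ℝ (Fin n) →ₗ[ℝ] (Fin n → ℝ))

def ofE {n : ℕ} (W : Submodule ℝ (EuclideanSpace ℝ (Fin n))) : Submodule ℝ (Fin n → ℝ) :=
  W.comap ((WithLp.linearEquiv 2 ℝ (Fin n → ℝ)).symm : (Fin n → ℝ) →ₗ[ℝ] EuclideanSpace ℝ (Fin n))

lemma ofE_toE {n : ℕ} (X : Submodule ℝ (Fin n → ℝ)) : ofE (toE X) = X :=
  Submodule.ext fun _ => Iff.rfl

lemma finrank_toE {n : ℕ} (X : Submodule ℝ (Fin n → ℝ)) :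
    Module.finrank ℝ (toE X) = Module.finrank ℝ X := by
  rw [toE, Submodule.comap_equiv_eq_map_symm, LinearEquiv.finrank_map_eq]

lemma transpose_mul_self_eq_sum {n : ℕ} (B : Matrix (Fin n) (Fin n) ℝ) :
    Bᴴ * B = ∑ i, Matrix.vecMulVec (B i) (B i) := by
  ext j k
  simp [Matrix.mul_apply, Matrix.conjTranspose_apply, Matrix.vecMulVec_apply,
    Matrix.sum_apply]

/-- A PSD matrix vanishing on a subspace `W` lies in `CPset (Wᗮ)`. -/
lemma mem_CP_of_rows {n : ℕ} {A : Matrix (Fin n) (Fin n) ℝ} (hA : A.PosSemidef)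
    (W : Submodule ℝ (EuclideanSpace ℝ (Fin n)))
    (hker : ∀ x ∈ W, A *ᵥ x = 0) :
    A ∈ CPset (ofE Wᗮ : Set (Fin n → ℝ)) := by
  obtain ⟨B, rfl⟩ : ∃ B : Matrix (Fin n) (Fin n) ℝ, A = Bᴴ * B := by
    open scoped MatrixOrder in
    obtain ⟨B, rfl⟩ := CStarAlgebra.nonneg_iff_eq_star_mul_self.mp hA.nonneg
    exact ⟨B, rfl⟩
  refine ⟨n + 1, Nat.succ_pos n, Fin.cons 0 (fun i => B i), fun i => ?_, ?_⟩
  · refine Fin.cases ?_ ?_ i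
    · simp [Submodule.zero_mem]
    · intro i
      have hcons : (Fin.cons 0 (fun i => B i) : Fin (n+1) → (Fin n → ℝ)) i.succ = B i := by
        simp
      rw [hcons]
      show WithLp.toLp 2 (B i) ∈ Wᗮ
      refine (Submodule.mem_orthogonal (𝕜 := ℝ) (E := EuclideanSpace ℝ (Fin n)) W
        (WithLp.toLp 2 (B i))).mpr (fun x hx => ?_)
      have h0 : x ⬝ᵥ (Bᴴ * B) *ᵥ x = 0 := by rw [hker x hx]; simp
      rw [transpose_mul_self_eq_sum, dot_sum_vecMulVec (s := Finset.univ) (a := B)] at h0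
      have hz := (Finset.sum_eq_zero_iff_of_nonneg
        (fun (j : Fin n) (_ : j ∈ Finset.univ) => sq_nonneg (B j ⬝ᵥ x))).mp h0 i
        (Finset.mem_univ i)
      have hbx : B i ⬝ᵥ x = 0 := pow_eq_zero_iff (by norm_num) |>.mp hz
      rw [inner_eq_dot, dotProduct_comm]
      exact hbx
  · rw [transpose_mul_self_eq_sum, Fin.sum_univ_succ]
    have h0 : Matrix.vecMulVec (0 : Fin n → ℝ) (0 : Fin n → ℝ) = 0 := by
      ext a b; simp [Matrix.vecMulVec_apply]
    simp [Fin.cons_succ, Fin.cons_zero, h0]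

/-- `CPset S ⊆ COP(K)` for any `S`, `K`. -/
lemma cp_subset_cop {n : ℕ} (S : Set (Fin n → ℝ)) (K : Set (Fin n → ℝ)) :
    CPset S ⊆ COPset K := by
  rintro A ⟨k, hk, f, hf, rfl⟩
  constructor
  · show (∑ i, Matrix.vecMulVec (f i) (f i))ᵀ = _
    rw [Matrix.transpose_sum]
    exact Finset.sum_congr rfl fun i _ => by
      ext a b; simp [Matrix.vecMulVec_apply, mul_comm]
  · intro x _
    rw [dot_sum_vecMulVec]
    exact Finset.sum_nonneg fun i _ => sq_nonneg _

lemma quad_nonneg_cs {a b c : ℝ} (hc : 0 ≤ c)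
    (h : ∀ s : ℝ, 0 ≤ a + 2*s*b + s^2*c) : b^2 ≤ c * a := by
  rcases eq_or_lt_of_le hc with hc0 | hc0
  · have hb : b = 0 := by
      by_contra hb
      have h' := h (-(a+1)/(2*b))
      have hcomp : 2 * (-(a+1)/(2*b)) * b = -(a+1) := by field_simp
      rw [hcomp, ← hc0, mul_zero] at h'
      linarith
    rw [hb, ← hc0]
    norm_num
  · have h' := h (-b/c)
    have key : a + 2*(-b/c)*b + (-b/c)^2*c = (c*a - b^2)/c := by
      field_simp; ring
    rw [key] at h'
    have h'' := mul_le_mul_of_nonneg_right h' (le_of_lt hc0)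
    rw [zero_mul, div_mul_cancel₀ _ (ne_of_gt hc0)] at h''
    linarith

/-- Cauchy–Schwarz for a PSD quadratic form. -/
lemma psd_cauchy_schwarz {n : ℕ} {A : Matrix (Fin n) (Fin n) ℝ} (hA : A.PosSemidef)
    (w x : Fin n → ℝ) : (w ⬝ᵥ A *ᵥ x)^2 ≤ (w ⬝ᵥ A *ᵥ w) * (x ⬝ᵥ A *ᵥ x) := by
  have hsym : A.IsSymm := by
    have := hA.1; rwa [Matrix.IsHermitian, Matrix.conjTranspose_eq_transpose_of_trivial] at this
  have hq : ∀ s : ℝ, 0 ≤ x ⬝ᵥ A *ᵥ x + 2*s*(w ⬝ᵥ A *ᵥ x) + s^2 * (w ⬝ᵥ A *ᵥ w) := by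
    intro s
    have h := hA.dotProduct_mulVec_nonneg (x + s • w)
    simp only [star_trivial] at h
    rw [quad_expand] at h
    rw [dot_mulVec_symm hsym x w] at h
    linarith
  have := quad_nonneg_cs (by simpa using (hA.dotProduct_mulVec_nonneg w)) hq
  linarith


lemma cop_zero {n : ℕ} (K : Set (Fin n → ℝ)) : (0 : Matrix (Fin n) (Fin n) ℝ) ∈ COPset K := by
  refine ⟨by simp [Matrix.IsSymm], fun x _ => by simp⟩

lemma cop_add {n : ℕ} {K : Set (Fin n → ℝ)} {A B : Matrix (Fin n) (Fin n) ℝ}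
    (hA : A ∈ COPset K) (hB : B ∈ COPset K) : A + B ∈ COPset K := by
  refine ⟨?_, fun x hx => ?_⟩
  · show (A + B)ᵀ = A + B
    rw [Matrix.transpose_add, hA.1, hB.1]
  · rw [Matrix.add_mulVec, dotProduct_add]
    exact add_nonneg (hA.2 x hx) (hB.2 x hx)

lemma cop_smul {n : ℕ} {K : Set (Fin n → ℝ)} {A : Matrix (Fin n) (Fin n) ℝ}
    (hA : A ∈ COPset K) {c : ℝ} (hc : 0 ≤ c) : c • A ∈ COPset K := by
  refine ⟨?_, fun x hx => ?_⟩
  · show (c • A)ᵀ = c • A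
    rw [Matrix.transpose_smul, hA.1]
  · rw [Matrix.smul_mulVec, dotProduct_smul, smul_eq_mul]
    exact mul_nonneg hc (hA.2 x hx)

/-- The zero set of a functional nonnegative on `COP` is a face of `COP`. -/
lemma face_of_zero_set {n : ℕ} (K : Set (Fin n → ℝ)) (M : Matrix (Fin n) (Fin n) ℝ)
    (hM : ∀ A ∈ COPset K, 0 ≤ mip M A) :
    IsFaceOf (COPset K) {A ∈ COPset K | mip M A = 0} := by
  refine ⟨⟨0, cop_zero K, mip_zero_right M⟩, fun A hA => hA.1, ?_, ?_, ?_⟩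
  · rintro A ⟨hA, hA0⟩ B ⟨hB, hB0⟩ a b ha hb hab
    refine ⟨cop_add (cop_smul hA ha) (cop_smul hB hb), ?_⟩
    rw [mip_add_right, mip_smul_right, mip_smul_right, hA0, hB0]
    ring
  · rintro A ⟨hA, hA0⟩ c hc
    exact ⟨cop_smul hA hc, by rw [mip_smul_right, hA0, mul_zero]⟩
  · rintro A hA B hB ⟨hABc, hAB0⟩
    rw [mip_add_right] at hAB0
    have h1 := hM A hA
    have h2 := hM B hB
    exact ⟨⟨hA, by linarith⟩, ⟨hB, by linarith⟩⟩

lemma face_add_mem {M : Type*} [AddCommMonoid M] [Module ℝ M] {C F : Set M}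
    (hF : IsFaceOf C F) {a b : M} (ha : a ∈ F) (hb : b ∈ F) : a + b ∈ F := by
  have h := hF.2.2.1 ha hb (by norm_num : (0:ℝ) ≤ 1/2) (by norm_num : (0:ℝ) ≤ 1/2)
    (by norm_num)
  have h2 := hF.2.2.2.1 _ h (2:ℝ) (by norm_num)
  rw [smul_add, smul_smul, smul_smul] at h2
  norm_num at h2
  exact h2

lemma face_zero_mem {M : Type*} [AddCommMonoid M] [Module ℝ M] {C F : Set M}
    (hF : IsFaceOf C F) : (0 : M) ∈ F := by
  obtain ⟨x, hx⟩ := hF.1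
  have := hF.2.2.2.1 x hx 0 le_rfl
  rwa [zero_smul] at this

/-- For a symmetric matrix, `(ker)ᗮ = range` (as submodules of Euclidean space). -/
lemma ker_perp_le_range {n : ℕ} {A : Matrix (Fin n) (Fin n) ℝ} (hA : A.IsSymm)
    {a : Fin n → ℝ}
    (ha : WithLp.toLp 2 a ∈ (toE (LinearMap.ker A.mulVecLin))ᗮ) :
    ∃ w, A *ᵥ w = a := by
  set K : Submodule ℝ (EuclideanSpace ℝ (Fin n)) := toE (LinearMap.ker A.mulVecLin) with hK
  set R : Submodule ℝ (EuclideanSpace ℝ (Fin n)) := toE (LinearMap.range A.mulVecLin) with hR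
  have hle : R ≤ Kᗮ := by
    rintro z ⟨w, hw⟩
    refine (Submodule.mem_orthogonal (𝕜 := ℝ) (E := EuclideanSpace ℝ (Fin n)) K
      _).mpr (fun x hx => ?_)
    have hx0 : A *ᵥ x = 0 := hx
    rw [inner_eq_dot]
    have hw' : (z : Fin n → ℝ) = A *ᵥ w := hw.symm
    rw [hw']
    show x ⬝ᵥ A *ᵥ w = 0
    rw [dot_mulVec_symm hA x w, hx0]
    simp
  have hrank : Module.finrank ℝ Kᗮ ≤ Module.finrank ℝ R := by
    have h1 := Submodule.finrank_add_finrank_orthogonal (𝕜 := ℝ)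
      (E := EuclideanSpace ℝ (Fin n)) K
    have h3 : Module.finrank ℝ (EuclideanSpace ℝ (Fin n)) = n := by
      simp [finrank_euclideanSpace]
    rw [h3] at h1
    have h2 : Module.finrank ℝ R + Module.finrank ℝ K = n := by
      have h := LinearMap.finrank_range_add_finrank_ker
        (A.mulVecLin : (Fin n → ℝ) →ₗ[ℝ] (Fin n → ℝ))
      rw [show Module.finrank ℝ (Fin n → ℝ) = n by simp] at h
      rw [hR, hK, finrank_toE, finrank_toE]
      exact h
    omega
  have heq : R = Kᗮ := Submodule.eq_of_le_of_finrank_le hle hrank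
  have : WithLp.toLp 2 a ∈ R := heq ▸ ha
  obtain ⟨w, hw⟩ := this
  exact ⟨w, hw⟩


open RealInnerProductSpace in
lemma perp_identity {n : ℕ} (u : EuclideanSpace ℝ (Fin n)) (hu : u ≠ 0)
    (X : Submodule ℝ (EuclideanSpace ℝ (Fin n))) (hX : ∀ x ∈ X, ⟪u, x⟫ = 0) :
    (Submodule.span ℝ {u} ⊔ (X ⊔ Submodule.span ℝ {u})ᗮ)ᗮ = X := by
  rw [← Submodule.inf_orthogonal, Submodule.orthogonal_orthogonal]
  ext z
  constructor
  · rintro ⟨hz1, hz2⟩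
    obtain ⟨x, hx, w, hw, rfl⟩ := Submodule.mem_sup.mp hz2
    obtain ⟨c, rfl⟩ := Submodule.mem_span_singleton.mp hw
    have huz : ⟪u, x + c • u⟫ = 0 := by
      exact (Submodule.mem_orthogonal _ _).mp hz1 u (Submodule.mem_span_singleton_self u)
    rw [inner_add_right, hX x hx, inner_smul_right, zero_add] at huz
    have hunz : ⟪u, u⟫ ≠ 0 := by
      rw [real_inner_self_eq_norm_sq]
      have : ‖u‖ ≠ 0 := norm_ne_zero_iff.mpr hu
      positivity
    have hc : c = 0 := by
      rcases mul_eq_zero.mp huz with h | h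
      · exact h
      · exact absurd h hunz
    rw [hc, zero_smul, add_zero]
    exact hx
  · intro hz
    refine ⟨(Submodule.mem_orthogonal _ _).mpr fun y hy => ?_,
      Submodule.mem_sup_left hz⟩
    obtain ⟨c, rfl⟩ := Submodule.mem_span_singleton.mp hy
    have h0 : (inner ℝ u z : ℝ) = 0 := hX z hz
    rw [inner_smul_left, h0, mul_zero]

lemma span_onb_eq {n : ℕ} (Y : Submodule ℝ (EuclideanSpace ℝ (Fin n))) :
    Submodule.span ℝ (Set.range (fun j =>
      ((stdOrthonormalBasis ℝ Y) j : EuclideanSpace ℝ (Fin n)))) = Y := by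
  have h1 : (fun j => ((stdOrthonormalBasis ℝ Y) j : EuclideanSpace ℝ (Fin n)))
      = Y.subtype ∘ (stdOrthonormalBasis ℝ Y) := rfl
  rw [h1, Set.range_comp, ← Submodule.map_span]
  have h2 : Submodule.span ℝ (Set.range ⇑(stdOrthonormalBasis ℝ Y)) = ⊤ := by
    have := (stdOrthonormalBasis ℝ Y).toBasis.span_eq
    rwa [OrthonormalBasis.coe_toBasis] at this
  rw [h2, Submodule.map_subtype_top]

open RealInnerProductSpace in
/-- Part (b) core: exposing functional for `CPset X`. -/
lemma part_b_core (hv : Real.sqrt (∑ i, v i ^ 2) < 1)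
    (X : Submodule ℝ (Fin (m+1) → ℝ)) (hX : X ≤ perpHyp (Matrix.vecCons 1 v)) :
    ∃ M : Matrix (Fin (m+1)) (Fin (m+1)) ℝ,
      (∀ A ∈ COPset (soc m), 0 ≤ mip M A) ∧
      CPset (X : Set (Fin (m+1) → ℝ)) = {A ∈ COPset (soc m) | mip M A = 0} := by
  set u := Matrix.vecCons 1 v with hudef
  set uE : EuclideanSpace ℝ (Fin (m+1)) := WithLp.toLp 2 u with huE
  have hu0 : u 0 = 1 := rfl
  have hune : uE ≠ 0 := by
    intro h
    have := congrFun (congrArg WithLp.ofLp h) 0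
    exact one_ne_zero this
  set XE : Submodule ℝ (EuclideanSpace ℝ (Fin (m+1))) := toE X with hXE
  have hXu : ∀ x ∈ XE, ⟪uE, x⟫ = 0 := by
    intro x hx
    rw [inner_eq_dot, dotProduct_comm]
    exact hX hx
  set Y : Submodule ℝ (EuclideanSpace ℝ (Fin (m+1)))
    := (XE ⊔ Submodule.span ℝ {uE})ᗮ with hY
  set b := stdOrthonormalBasis ℝ Y with hb
  set y : Fin (Module.finrank ℝ Y) → (Fin (m+1) → ℝ) := fun j => WithLp.ofLp ((b j : Y) : EuclideanSpace ℝ (Fin (m+1))) with hy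
  have hyu : ∀ j, y j ⬝ᵥ u = 0 := by
    intro j
    have hmem : ((b j : Y) : EuclideanSpace ℝ (Fin (m+1))) ∈ Y := (b j).2
    have := (Submodule.mem_orthogonal _ _).mp hmem uE
      (Submodule.mem_sup_right (Submodule.mem_span_singleton_self _))
    rw [inner_eq_dot] at this
    rw [dotProduct_comm]
    exact this
  have hynz : ∀ j, y j ≠ 0 := by
    intro j h
    have hbz : b j = 0 := Submodule.coe_eq_zero.mp ((WithLp.ofLp_eq_zero (p := 2)).mp h)
    have h1 : ‖b j‖ = 1 := b.orthonormal.1 j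
    rw [hbz] at h1
    simp at h1
  have hcross : ∀ j, ∃ s : ℝ, 0 < s ∧ ∀ A ∈ COPset (soc m),
      0 ≤ u ⬝ᵥ A *ᵥ u + s * (y j ⬝ᵥ A *ᵥ y j) :=
    fun j => crossing hv (hyu j) (hynz j)
  choose s hs1 hs2 using hcross
  set c : ℝ := 1 + ∑ j, 1/(s j) with hc
  set M := c • Matrix.vecMulVec u u + ∑ j, Matrix.vecMulVec (y j) (y j) with hM
  have hmipM : ∀ A : Matrix (Fin (m+1)) (Fin (m+1)) ℝ,
      mip M A = c * (u ⬝ᵥ A *ᵥ u) + ∑ j, y j ⬝ᵥ A *ᵥ y j := by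
    intro A
    rw [hM, mip_add_left, mip_smul_left, mip_vecMulVec_left, mip_sum_left]
    congr 1
    exact Finset.sum_congr rfl fun j _ => mip_vecMulVec_left _ _
  have hsplit : ∀ A : Matrix (Fin (m+1)) (Fin (m+1)) ℝ,
      c * (u ⬝ᵥ A *ᵥ u) + ∑ j, y j ⬝ᵥ A *ᵥ y j
        = (u ⬝ᵥ A *ᵥ u) + ∑ j, (1/(s j)) * ((u ⬝ᵥ A *ᵥ u) + s j * (y j ⬝ᵥ A *ᵥ y j)) := by
    intro A
    have hterm : ∀ j, (1/(s j)) * ((u ⬝ᵥ A *ᵥ u) + s j * (y j ⬝ᵥ A *ᵥ y j))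
        = (1/(s j)) * (u ⬝ᵥ A *ᵥ u) + y j ⬝ᵥ A *ᵥ y j := by
      intro j
      have hne := ne_of_gt (hs1 j)
      field_simp
    rw [Finset.sum_congr rfl fun j _ => hterm j, Finset.sum_add_distrib, hc,
      ← Finset.sum_mul]
    ring
  have huA : ∀ A ∈ COPset (soc m), 0 ≤ u ⬝ᵥ A *ᵥ u := by
    intro A hA
    exact hA.2 u (u_mem_soc hv)
  have hnonneg : ∀ A ∈ COPset (soc m), 0 ≤ mip M A := by
    intro A hA
    rw [hmipM, hsplit]
    refine add_nonneg (huA A hA) (Finset.sum_nonneg fun j _ => ?_)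
    exact mul_nonneg (le_of_lt (one_div_pos.mpr (hs1 j))) (hs2 j A hA)
  refine ⟨M, hnonneg, Set.eq_of_subset_of_subset ?_ ?_⟩
  · -- CPset X ⊆ zero set
    rintro A hACP
    obtain ⟨k, hk, f, hf, rfl⟩ := hACP
    refine ⟨cp_subset_cop _ _ ⟨k, hk, f, hf, rfl⟩, ?_⟩
    rw [hmipM]
    have hfu : ∀ i, f i ⬝ᵥ u = 0 := fun i => hX (hf i)
    have hfy : ∀ j i, f i ⬝ᵥ y j = 0 := by
      intro j i
      have hmem : ((b j : Y) : EuclideanSpace ℝ (Fin (m+1))) ∈ Y := (b j).2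
      have := (Submodule.mem_orthogonal _ _).mp hmem (WithLp.toLp 2 (f i))
        (Submodule.mem_sup_left (hf i))
      rw [inner_eq_dot] at this
      exact this
    rw [dot_sum_vecMulVec]
    rw [Finset.sum_congr rfl fun i _ => by rw [hfu i]]
    have hz2 : ∀ j, y j ⬝ᵥ (∑ i, Matrix.vecMulVec (f i) (f i)) *ᵥ y j = 0 := by
      intro j
      rw [dot_sum_vecMulVec]
      rw [Finset.sum_congr rfl fun i _ => by rw [hfy j i]]
      simp
    rw [Finset.sum_congr rfl fun j _ => hz2 j]
    simp
  · -- zero set ⊆ CPset X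
    rintro A ⟨hA, hA0⟩
    rw [hmipM, hsplit] at hA0
    have huA' := huA A hA
    have hterms : ∀ j ∈ Finset.univ,
        0 ≤ (1/(s j)) * ((u ⬝ᵥ A *ᵥ u) + s j * (y j ⬝ᵥ A *ᵥ y j)) :=
      fun j _ => mul_nonneg (le_of_lt (one_div_pos.mpr (hs1 j))) (hs2 j A hA)
    have hsumnn := Finset.sum_nonneg hterms
    have huA0 : u ⬝ᵥ A *ᵥ u = 0 := by linarith
    have hsum0 : ∑ j, (1/(s j)) * ((u ⬝ᵥ A *ᵥ u) + s j * (y j ⬝ᵥ A *ᵥ y j)) = 0 := by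
      linarith
    have hyA0 : ∀ j, y j ⬝ᵥ A *ᵥ y j = 0 := by
      intro j
      have h0 := (Finset.sum_eq_zero_iff_of_nonneg hterms).mp hsum0 j (Finset.mem_univ j)
      rcases mul_eq_zero.mp h0 with h | h
      · exact absurd h (ne_of_gt (one_div_pos.mpr (hs1 j)))
      · rw [huA0, zero_add] at h
        rcases mul_eq_zero.mp h with h' | h'
        · exact absurd h' (ne_of_gt (hs1 j))
        · exact h'
    obtain ⟨hpsd, hAu⟩ := psd_of_cop_perp hv hA huA0
    have hAy : ∀ j, A *ᵥ y j = 0 := fun j => psd_dot_zero hpsd (hyA0 j)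
    set W : Submodule ℝ (EuclideanSpace ℝ (Fin (m+1)))
      := Submodule.span ℝ {uE} ⊔ Y with hW
    have hker : ∀ x ∈ W, A *ᵥ x = 0 := by
      intro x hx
      have hle : W ≤ toE (LinearMap.ker A.mulVecLin) := by
        apply sup_le
        · rw [Submodule.span_le]
          intro z hz
          rw [Set.mem_singleton_iff] at hz
          subst hz
          exact hAu
        · rw [hb] at hy
          rw [← span_onb_eq Y, Submodule.span_le]
          rintro z ⟨j, rfl⟩
          exact hAy j
      exact hle hx
    have hmem := mem_CP_of_rows hpsd W hker
    have hperp : Wᗮ = XE := by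
      rw [hW, hY]
      exact perp_identity uE hune XE hXu
    rw [hperp, hXE, ofE_toE] at hmem
    exact hmem


lemma vecMulVec_add_expand {n : ℕ} (a b : Fin n → ℝ) :
    Matrix.vecMulVec (a + b) (a + b)
      = Matrix.vecMulVec a a + Matrix.vecMulVec a b
        + Matrix.vecMulVec b a + Matrix.vecMulVec b b := by
  ext r t
  simp [Matrix.vecMulVec_apply]
  ring

lemma single_vv_mem_CP {n : ℕ} {S : Set (Fin n → ℝ)} {a : Fin n → ℝ} (ha : a ∈ S) :
    Matrix.vecMulVec a a ∈ CPset S := by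
  exact ⟨1, one_pos, fun _ => a, fun _ => ha, by rw [Fin.sum_univ_one]⟩

open RealInnerProductSpace in
lemma cp_dim {n : ℕ} (X : Submodule ℝ (Fin n → ℝ)) :
    setDim (CPset (X : Set (Fin n → ℝ)))
      = (Module.finrank ℝ X) * (Module.finrank ℝ X + 1) / 2 := by
  classical
  set XE : Submodule ℝ (EuclideanSpace ℝ (Fin n)) := toE X with hXE
  set d := Module.finrank ℝ XE with hd
  have hdX : Module.finrank ℝ X = d := (finrank_toE X).symm
  set e := stdOrthonormalBasis ℝ XE with he
  set Evec : Fin d → (Fin n → ℝ) := fun i => WithLp.ofLp ((e i : XE) : EuclideanSpace ℝ (Fin n))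
    with hEvec
  have hEmem : ∀ i, Evec i ∈ X := fun i => (e i).2
  have hdot : ∀ i j, Evec i ⬝ᵥ Evec j = if i = j then 1 else 0 := by
    intro i j
    have := orthonormal_iff_ite.mp e.orthonormal i j
    rw [Submodule.coe_inner, inner_eq_dot] at this
    exact this
  set S := {p : Fin d × Fin d // p.1 ≤ p.2} with hS
  set fam : S → Matrix (Fin n) (Fin n) ℝ := fun p =>
    Matrix.vecMulVec (Evec p.1.1) (Evec p.1.2) + Matrix.vecMulVec (Evec p.1.2) (Evec p.1.1)
    with hfam
  -- each symmetric pair is in the span of CPset X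
  have hpair_mem : ∀ i j : Fin d,
      Matrix.vecMulVec (Evec i) (Evec j) + Matrix.vecMulVec (Evec j) (Evec i)
        ∈ Submodule.span ℝ (CPset (X : Set (Fin n → ℝ))) := by
    intro i j
    have hident : Matrix.vecMulVec (Evec i) (Evec j) + Matrix.vecMulVec (Evec j) (Evec i)
        = Matrix.vecMulVec (Evec i + Evec j) (Evec i + Evec j)
          - Matrix.vecMulVec (Evec i) (Evec i) - Matrix.vecMulVec (Evec j) (Evec j) := by
      rw [vecMulVec_add_expand]; abel
    rw [hident]
    refine Submodule.sub_mem _ (Submodule.sub_mem _ ?_ ?_) ?_ <;>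
      exact Submodule.subset_span (single_vv_mem_CP (by
        first
        | exact X.add_mem (hEmem i) (hEmem j)
        | exact hEmem i
        | exact hEmem j))
  -- every vecMulVec a a for a ∈ X is in span of the family
  have hvv_mem : ∀ a ∈ X, Matrix.vecMulVec a a ∈ Submodule.span ℝ (Set.range fam) := by
    intro a ha
    obtain ⟨cfun, hrepr⟩ : ∃ cfun : Fin d → ℝ, a = ∑ i, cfun i • Evec i := by
      refine ⟨fun i => e.repr ⟨WithLp.toLp 2 a, ha⟩ i, ?_⟩
      have := e.sum_repr ⟨WithLp.toLp 2 a, ha⟩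
      have hco := congrArg (fun z => WithLp.linearEquiv 2 ℝ (Fin n → ℝ) (Submodule.subtype XE z)) this
      simp only [map_sum, _root_.map_smul] at hco
      exact hco.symm
    have hexpand : Matrix.vecMulVec a a
        = ∑ i, ∑ j, (cfun i * cfun j) • Matrix.vecMulVec (Evec i) (Evec j) := by
      rw [hrepr]
      ext r t
      simp only [Matrix.vecMulVec_apply, Matrix.sum_apply, Matrix.smul_apply,
        Finset.sum_apply, Pi.smul_apply, smul_eq_mul]
      rw [Finset.sum_mul_sum]
      exact Finset.sum_congr rfl fun i _ => Finset.sum_congr rfl fun j _ => by ring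
    have hsym : Matrix.vecMulVec a a
        = ∑ i, ∑ j, ((cfun i * cfun j)/2) •
            (Matrix.vecMulVec (Evec i) (Evec j) + Matrix.vecMulVec (Evec j) (Evec i)) := by
      rw [hexpand]
      have h1 : ∀ i j : Fin d, ((cfun i * cfun j)/2) •
            (Matrix.vecMulVec (Evec i) (Evec j) + Matrix.vecMulVec (Evec j) (Evec i))
          = ((cfun i * cfun j)/2) • Matrix.vecMulVec (Evec i) (Evec j)
            + ((cfun i * cfun j)/2) • Matrix.vecMulVec (Evec j) (Evec i) := by
        intro i j; rw [smul_add]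
      rw [Finset.sum_congr rfl fun i _ => Finset.sum_congr rfl fun j _ => h1 i j]
      rw [Finset.sum_congr rfl fun i (_ : i ∈ Finset.univ) => Finset.sum_add_distrib,
        Finset.sum_add_distrib]
      have h2 : ∑ i, ∑ j, ((cfun i * cfun j)/2) • Matrix.vecMulVec (Evec j) (Evec i)
          = ∑ i, ∑ j, ((cfun j * cfun i)/2) • Matrix.vecMulVec (Evec i) (Evec j) := by
        rw [Finset.sum_comm]
      rw [h2, ← Finset.sum_add_distrib]
      rw [Finset.sum_congr rfl fun i (_ : i ∈ Finset.univ) => (Finset.sum_add_distrib).symm]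
      refine Finset.sum_congr rfl fun i _ => Finset.sum_congr rfl fun j _ => ?_
      rw [← add_smul]
      congr 1
      ring
    rw [hsym]
    refine Submodule.sum_mem _ fun i _ => Submodule.sum_mem _ fun j _ =>
      Submodule.smul_mem _ _ ?_
    rcases le_total i j with hij | hij
    · exact Submodule.subset_span ⟨⟨(i, j), hij⟩, rfl⟩
    · have : Matrix.vecMulVec (Evec i) (Evec j) + Matrix.vecMulVec (Evec j) (Evec i)
          = fam ⟨(j, i), hij⟩ := by rw [hfam]; dsimp; rw [add_comm]
      rw [this]
      exact Submodule.subset_span ⟨⟨(j, i), hij⟩, rfl⟩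
  -- span equality
  have hspan : Submodule.span ℝ (CPset (X : Set (Fin n → ℝ)))
      = Submodule.span ℝ (Set.range fam) := by
    apply le_antisymm
    · rw [Submodule.span_le]
      rintro A ⟨k, hk, f, hf, rfl⟩
      exact Submodule.sum_mem _ fun i _ => hvv_mem (f i) (hf i)
    · rw [Submodule.span_le]
      rintro A ⟨p, rfl⟩
      exact hpair_mem p.1.1 p.1.2
  -- linear independence
  have hLI : LinearIndependent ℝ fam := by
    rw [Fintype.linearIndependent_iff]
    intro cc hcc p₀
    obtain ⟨⟨k, l⟩, hkl⟩ := p₀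
    have happ := congrArg (fun M : Matrix (Fin n) (Fin n) ℝ =>
      Evec k ⬝ᵥ M *ᵥ Evec l) hcc
    rw [dot_sum_mulVec] at happ
    have hzero : Evec k ⬝ᵥ (0 : Matrix (Fin n) (Fin n) ℝ) *ᵥ Evec l = 0 := by simp
    rw [hzero] at happ
    have hterm : ∀ p : S, Evec k ⬝ᵥ (cc p • fam p) *ᵥ Evec l
        = cc p * ((if k = p.1.1 then (1:ℝ) else 0) * (if p.1.2 = l then 1 else 0)
          + (if k = p.1.2 then (1:ℝ) else 0) * (if p.1.1 = l then 1 else 0)) := by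
      intro p
      rw [Matrix.smul_mulVec, dotProduct_smul, smul_eq_mul]
      congr 1
      rw [hfam]
      dsimp only
      rw [Matrix.add_mulVec, dotProduct_add, dot_vecMulVec_mulVec, dot_vecMulVec_mulVec,
        hdot, hdot, hdot, hdot]
    rw [Finset.sum_congr rfl fun p _ => hterm p] at happ
    rw [Finset.sum_eq_single ⟨(k, l), hkl⟩] at happ
    · simp only [if_pos rfl] at happ
      by_cases hkl' : k = l
      · rw [if_pos hkl'] at happ
        norm_num at happ
        exact happ
      · rw [if_neg hkl'] at happ
        norm_num at happ
        exact happ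
    · rintro ⟨⟨i, j⟩, hij⟩ _ hne
      simp only
      by_cases hA : k = i ∧ j = l
      · exact absurd (Subtype.ext (Prod.ext hA.1.symm hA.2)) hne
      by_cases hB : k = j ∧ i = l
      · exfalso
        apply hne
        have n1 : (i:ℕ) ≤ (j:ℕ) := hij
        have n2 : (k:ℕ) ≤ (l:ℕ) := hkl
        have n3 : (k:ℕ) = (j:ℕ) := by rw [hB.1]
        have n4 : (i:ℕ) = (l:ℕ) := by rw [hB.2]
        have heq : (i:ℕ) = (k:ℕ) ∧ (j:ℕ) = (l:ℕ) := by omega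
        refine Subtype.ext ?_
        show ((i, j) : Fin d × Fin d) = (k, l)
        exact Prod.ext (Fin.ext heq.1) (Fin.ext heq.2)
      · have hz1 : (if k = i then (1:ℝ) else 0) * (if j = l then (1:ℝ) else 0) = 0 := by
          rcases Decidable.em (k = i) with h | h
          · have hjl : j ≠ l := fun hjl => hA ⟨h, hjl⟩
            rw [if_neg hjl, mul_zero]
          · rw [if_neg h, zero_mul]
        have hz2 : (if k = j then (1:ℝ) else 0) * (if i = l then (1:ℝ) else 0) = 0 := by
          rcases Decidable.em (k = j) with h | h
          · have hil : i ≠ l := fun hil => hB ⟨h, hil⟩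
            rw [if_neg hil, mul_zero]
          · rw [if_neg h, zero_mul]
        rw [hz1, hz2]
        ring
    · intro h
      exact absurd (Finset.mem_univ _) h
  -- conclude
  show Module.finrank ℝ (Submodule.span ℝ (CPset (X : Set (Fin n → ℝ)))) = _
  rw [hspan, finrank_span_eq_card hLI, hdX]
  have hcard : Fintype.card S = Fintype.card (Sym2 (Fin d)) :=
    (Fintype.card_congr (Sym2.sortEquiv (α := Fin d))).symm
  rw [hcard, Sym2.card]
  simp only [Fintype.card_fin]
  rw [Nat.choose_two_right]
  simp [Nat.mul_comm]

open RealInnerProductSpace in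
/-- Part (a): faces inside the maximal face are `CPset X`. -/
lemma part_a (hv : Real.sqrt (∑ i, v i ^ 2) < 1)
    (F : Set (Matrix (Fin (m+1)) (Fin (m+1)) ℝ))
    (hF : IsFaceOf (COPset (soc m)) F)
    (hsub : F ⊆ {A ∈ COPset (soc m) |
      mip A (Matrix.vecMulVec (Matrix.vecCons 1 v) (Matrix.vecCons 1 v)) = 0}) :
    ∃ X : Submodule ℝ (Fin (m+1) → ℝ),
      X ≤ perpHyp (Matrix.vecCons 1 v) ∧ F = CPset (X : Set (Fin (m+1) → ℝ)) := by
  classical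
  set u := Matrix.vecCons 1 v with hudef
  have hFpsd : ∀ A ∈ F, A.PosSemidef ∧ A *ᵥ u = 0 := by
    intro A hA
    obtain ⟨hAc, hA0⟩ := hsub hA
    rw [mip_vecMulVec_right] at hA0
    exact psd_of_cop_perp hv hAc hA0
  -- minimal kernel dimension
  set T : Set ℕ := {k | ∃ A ∈ F, Module.finrank ℝ
    (toE (LinearMap.ker A.mulVecLin)) = k} with hT
  have hTne : T.Nonempty := by
    obtain ⟨A, hA⟩ := hF.1
    exact ⟨_, A, hA, rfl⟩
  obtain ⟨A₀, hA₀F, hA₀min⟩ : ∃ A₀ ∈ F, Module.finrank ℝ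
      (toE (LinearMap.ker A₀.mulVecLin)) = sInf T :=
    Nat.sInf_mem hTne
  set K₀ : Submodule ℝ (EuclideanSpace ℝ (Fin (m+1))) := toE (LinearMap.ker A₀.mulVecLin) with hK₀
  have hA₀psd : A₀.PosSemidef := (hFpsd A₀ hA₀F).1
  have hA₀u : A₀ *ᵥ u = 0 := (hFpsd A₀ hA₀F).2
  have hA₀symm : A₀.IsSymm := by
    have := hA₀psd.1
    rwa [Matrix.IsHermitian, Matrix.conjTranspose_eq_transpose_of_trivial] at this
  -- every A in F kills K₀
  have hkerF : ∀ A ∈ F, ∀ x ∈ K₀, A *ᵥ x = 0 := by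
    intro A hAF x hx
    have hAx0 : A₀ *ᵥ x = 0 := hx
    have hApsd : A.PosSemidef := (hFpsd A hAF).1
    have hsumF : A + A₀ ∈ F := face_add_mem hF hAF hA₀F
    have hsumpsd : (A + A₀).PosSemidef := (hFpsd _ hsumF).1
    have hle : toE (LinearMap.ker (A + A₀).mulVecLin) ≤ K₀ := by
      intro z hz
      have hz0 : (A + A₀) *ᵥ z = 0 := hz
      have hq : z ⬝ᵥ A *ᵥ z + z ⬝ᵥ A₀ *ᵥ z = 0 := by
        have := congrArg (fun w => z ⬝ᵥ w) hz0
        simpa [Matrix.add_mulVec, dotProduct_add] using this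
      have h1 : 0 ≤ z ⬝ᵥ A *ᵥ z := by simpa using hApsd.dotProduct_mulVec_nonneg z
      have h2 : 0 ≤ z ⬝ᵥ A₀ *ᵥ z := by simpa using hA₀psd.dotProduct_mulVec_nonneg z
      have h3 : z ⬝ᵥ A₀ *ᵥ z = 0 := by linarith
      exact psd_dot_zero hA₀psd h3
    have hfr : Module.finrank ℝ K₀ ≤ Module.finrank ℝ
        (toE (LinearMap.ker (A + A₀).mulVecLin)) := by
      rw [hA₀min]
      exact Nat.sInf_le ⟨A + A₀, hsumF, rfl⟩
    have heq : toE (LinearMap.ker (A + A₀).mulVecLin) = K₀ :=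
      Submodule.eq_of_le_of_finrank_le hle hfr
    have hxsum : (A + A₀) *ᵥ x = 0 := by
      have : x ∈ toE (LinearMap.ker (A + A₀).mulVecLin) := heq ▸ hx
      exact this
    have := congrFun hxsum
    funext i
    have h4 := congrFun (Matrix.add_mulVec A A₀ x) i
    have h5 := congrFun hxsum i
    have h6 := congrFun hAx0 i
    rw [h4] at h5
    simpa [h6] using h5
  refine ⟨ofE K₀ᗮ, ?_, ?_⟩
  · -- K₀ᗮ ≤ perpHyp u
    intro x hx
    have hu : WithLp.toLp 2 u ∈ K₀ := hA₀u
    have := (Submodule.mem_orthogonal (𝕜 := ℝ) (E := EuclideanSpace ℝ (Fin (m+1)))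
      K₀ (WithLp.toLp 2 x)).mp hx (WithLp.toLp 2 u) hu
    rw [inner_eq_dot] at this
    show x ⬝ᵥ u = 0
    rw [dotProduct_comm]
    exact this
  · apply Set.eq_of_subset_of_subset
    · -- F ⊆ CPset
      intro A hA
      exact mem_CP_of_rows (hFpsd A hA).1 K₀ (hkerF A hA)
    · -- CPset ⊆ F
      rintro A ⟨k, hk, f, hf, rfl⟩
      have hCi : ∀ i, Matrix.vecMulVec (f i) (f i) ∈ F := by
        intro i
        obtain ⟨w, hw⟩ := ker_perp_le_range hA₀symm (a := f i) (hf i)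
        set t : ℝ := w ⬝ᵥ A₀ *ᵥ w with ht
        have htnn : 0 ≤ t := by simpa using hA₀psd.dotProduct_mulVec_nonneg w
        have hCS := psd_cauchy_schwarz hA₀psd w
        have hCicop : Matrix.vecMulVec (f i) (f i) ∈ COPset (soc m) :=
          cp_subset_cop Set.univ _ (single_vv_mem_CP (Set.mem_univ (f i)))
        have hDcop : t • A₀ - Matrix.vecMulVec (f i) (f i) ∈ COPset (soc m) := by
          constructor
          · show (t • A₀ - Matrix.vecMulVec (f i) (f i))ᵀ = _
            rw [Matrix.transpose_sub, Matrix.transpose_smul, hA₀symm]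
            congr 1
            ext a b
            simp [Matrix.vecMulVec_apply]
            ring
          · intro x _
            have hexp : x ⬝ᵥ (t • A₀ - Matrix.vecMulVec (f i) (f i)) *ᵥ x
                = t * (x ⬝ᵥ A₀ *ᵥ x) - (f i ⬝ᵥ x)^2 := by
              rw [Matrix.sub_mulVec, dotProduct_sub, Matrix.smul_mulVec,
                dotProduct_smul, smul_eq_mul, dot_vecMulVec_mulVec,
                dotProduct_comm x (f i)]
              ring
            rw [hexp]
            have hfx : f i ⬝ᵥ x = w ⬝ᵥ A₀ *ᵥ x := by
              rw [← hw, dotProduct_comm, dot_mulVec_symm hA₀symm]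
            rw [hfx]
            have := hCS x
            linarith
        have htA₀ : t • A₀ ∈ F := hF.2.2.2.1 A₀ hA₀F t htnn
        have hsumeq : Matrix.vecMulVec (f i) (f i)
            + (t • A₀ - Matrix.vecMulVec (f i) (f i)) = t • A₀ := by abel
        exact (hF.2.2.2.2 _ hCicop _ hDcop (by rw [hsumeq]; exact htA₀)).1
      exact Finset.sum_induction _ (· ∈ F) (fun a b ha hb => face_add_mem hF ha hb)
        (face_zero_mem hF) (fun i _ => hCi i)


end AuxProofs

/-- faces of `COP(Lⁿ)` inside the maximal face
`COP(Lⁿ) ∩ {(1;v)(1;v)ᵀ}^⊥`, with `‖v‖ < 1` (here `n = m + 1 ≥ 2`). -/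
theorem stmt4 (m : ℕ) (hm : 1 ≤ m) (v : Fin m → ℝ)
    (hv : Real.sqrt (∑ i, v i ^ 2) < 1) :
    (∀ F : Set (Matrix (Fin (m+1)) (Fin (m+1)) ℝ),
        IsFaceOf (COPset (soc m)) F →
        F ⊆ {A ∈ COPset (soc m) |
              mip A (Matrix.vecMulVec (Matrix.vecCons 1 v) (Matrix.vecCons 1 v)) = 0} →
        ∃ X : Submodule ℝ (Fin (m+1) → ℝ),
          X ≤ perpHyp (Matrix.vecCons 1 v) ∧ F = CPset (X : Set (Fin (m+1) → ℝ))) ∧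
    (∀ (d : ℕ) (X : Submodule ℝ (Fin (m+1) → ℝ)),
        X ≤ perpHyp (Matrix.vecCons 1 v) → Module.finrank ℝ X = d →
        IsExposedFaceOf (COPset (soc m)) (CPset (X : Set (Fin (m+1) → ℝ))) ∧
          setDim (CPset (X : Set (Fin (m+1) → ℝ))) = d * (d + 1) / 2) := by
  constructor
  · intro F hF hsub
    exact part_a hv F hF hsub
  · intro d X hX hfr
    obtain ⟨M, hnn, heq⟩ := part_b_core hv X hX
    refine ⟨⟨?_, M, hnn, heq⟩, ?_⟩
    · rw [heq]
      exact face_of_zero_set _ M hnn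
    · rw [cp_dim X, hfr]
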